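/- arXiv:1205.3817 — 2 statements merged into one kernel-verified Lean document; each statement's English description precedes it below -/
import Mathlib

section
/- For every integer r ≥ 1, the Lebesgue measure in ℝ^{1+r} of the set { (a, b₁, …, b_r) : b₁ ≥ b₂ ≥ ⋯ ≥ b_r ≥ 0, b₁ + ⋯ + b_r ≤ a, and 3a − (b₁ + ⋯ + b_r) ≤ 1 } equals 1/(3 · 2^r · r! · (r+1)!). -/
/-!
The linear map `(a, b) ↦ (3(a - Σ bᵢ), 2·1·(b₁ - b₂), 2·2·(b₂ - b₃), …, 2r·b_r)` is upper
triangular with determinant `3 · 2^r · r!`. Nonnegativity of its coordinates says exactly that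
`b` is antitone and nonnegative with `Σ bᵢ ≤ a`, and by Abel summation its coordinates add up to
`3a - Σ bᵢ`. So it maps the slice of the nef cone onto the corner simplex
`{y ≥ 0, Σ yᵢ ≤ 1}`, whose volume `1/(r+1)!` follows by induction on the dimension (Fubini).
-/

open MeasureTheory Finset
open scoped Nat

lemma Fin.antitone_snoc_iff {α : Type*} [Preorder α] {n : ℕ} {b : Fin n → α} {a : α} :
    Antitone (Fin.snoc b a : Fin (n + 1) → α) ↔ Antitone b ∧ ∀ i, a ≤ b i := by
  refine ⟨fun h => ⟨fun i j hij => ?_, fun i => ?_⟩, fun ⟨hb, ha⟩ i j hij => ?_⟩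
  · simpa using h (Fin.castSucc_le_castSucc_iff.2 hij)
  · simpa using h (Fin.le_last i.castSucc)
  · induction j using Fin.lastCases with
    | last => induction i using Fin.lastCases with
      | last => exact le_rfl
      | cast i => simpa using ha i
    | cast j => induction i using Fin.lastCases with
      | last => exact absurd hij (Fin.castSucc_lt_last j).not_ge
      | cast i => simpa using hb (Fin.castSucc_le_castSucc_iff.1 hij)

lemma Fin.sum_succ_mul_sub_succ {n : ℕ} (c : Fin (n + 1) → ℝ) :
    ∑ i : Fin n, ((i : ℝ) + 1) * (c i.castSucc - c i.succ)
      = ∑ i : Fin n, c i.castSucc - n * c (Fin.last n) := by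
  induction n with
  | zero => simp
  | succ n ih =>
    have h := ih (c ∘ Fin.castSucc)
    simp only [Function.comp_apply, Fin.castSucc_succ] at h
    rw [Fin.sum_univ_castSucc, Fin.sum_univ_castSucc (fun i => c i.castSucc)]
    simp only [Fin.val_castSucc, h, Fin.val_last, Fin.succ_last]
    push_cast
    ring

lemma Fin.snoc_single_zero {α : Type*} [Zero α] {n : ℕ} (m : Fin n) (x : α) :
    Fin.snoc (α := fun _ => α) (Pi.single m x) 0 = Pi.single m.castSucc x := by
  ext j
  induction j using Fin.lastCases with
  | last => simp [(Fin.castSucc_lt_last m).ne']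
  | cast j => simp [Pi.single_apply]

lemma Fin.tail_single_zero {α : Type*} [Zero α] {n : ℕ} (x : α) :
    Fin.tail (Pi.single (M := fun _ => α) (0 : Fin (n + 1)) x) = 0 := by
  ext i; simp [Fin.tail]

lemma Fin.tail_single_succ {α : Type*} [Zero α] {n : ℕ} (j : Fin n) (x : α) :
    Fin.tail (Pi.single (M := fun _ => α) j.succ x) = Pi.single j x := by
  ext i; simp [Fin.tail, Pi.single_apply]

def cornerSimplex (n : ℕ) (c : ℝ) : Set (Fin n → ℝ) := {x | (∀ i, 0 ≤ x i) ∧ ∑ i, x i ≤ c}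

lemma isClosed_cornerSimplex (n : ℕ) (c : ℝ) : IsClosed (cornerSimplex n c) := by
  simp only [cornerSimplex, Set.ofPred_and, Set.ofPred_forall]
  exact (isClosed_iInter fun i => isClosed_le (by fun_prop) (by fun_prop)).inter
    (isClosed_le (by fun_prop) (by fun_prop))

lemma cornerSimplex_eq_empty {n : ℕ} {c : ℝ} (hc : c < 0) : cornerSimplex n c = ∅ :=
  Set.eq_empty_of_forall_notMem fun _ ⟨hx, hsum⟩ =>
    (sum_nonneg fun i _ => hx i).not_gt (hsum.trans_lt hc)

lemma piFinSuccAbove_symm_preimage_cornerSimplex (n : ℕ) (c : ℝ) :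
    (MeasurableEquiv.piFinSuccAbove (fun _ : Fin (n + 1) => ℝ) 0).symm ⁻¹' cornerSimplex (n + 1) c
      = {p | 0 ≤ p.1 ∧ p.2 ∈ cornerSimplex n (c - p.1)} := by
  ext ⟨a, x⟩
  simp only [cornerSimplex, Set.mem_preimage, Set.mem_ofPred_eq,
    MeasurableEquiv.piFinSuccAbove_symm_apply, Fin.insertNthEquiv_zero, Fin.consEquiv_apply,
    Fin.forall_fin_succ, Fin.sum_univ_succ, Fin.cons_zero, Fin.cons_succ, le_sub_iff_add_le',
    and_assoc]

lemma integral_sub_pow_div_factorial (n : ℕ) (c : ℝ) :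
    ∫ a in (0)..c, (c - a) ^ n / n ! = c ^ (n + 1) / (n + 1)! := by
  rw [intervalIntegral.integral_comp_sub_left (fun u => u ^ n / n !), intervalIntegral.integral_div,
    integral_pow, Nat.factorial_succ]
  push_cast
  field_simp
  simp

theorem volume_cornerSimplex (n : ℕ) {c : ℝ} (hc : 0 ≤ c) :
    volume (cornerSimplex n c) = ENNReal.ofReal (c ^ n / n !) := by
  induction n generalizing c with
  | zero =>
    have : cornerSimplex 0 c = Set.univ := by ext; simp [cornerSimplex, hc]
    simp [this, volume_pi]
  | succ n ih =>
    let e := MeasurableEquiv.piFinSuccAbove (fun _ : Fin (n + 1) => ℝ) 0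
    have hslice (a : ℝ) : volume (Prod.mk a ⁻¹' (e.symm ⁻¹' cornerSimplex (n + 1) c))
        = (Set.Icc 0 c).indicator (fun a => ENNReal.ofReal ((c - a) ^ n / n !)) a := by
      rw [piFinSuccAbove_symm_preimage_cornerSimplex]
      by_cases ha : a ∈ Set.Icc 0 c
      · rw [Set.indicator_of_mem ha, ← ih (sub_nonneg.2 ha.2)]
        simp [ha.1]
      · rw [Set.indicator_of_notMem ha]
        rcases not_and_or.1 ha with ha | ha
        · simp [ha]
        · simp [cornerSimplex_eq_empty (sub_neg.2 (not_le.1 ha))]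
    have hint : IntegrableOn (fun a => (c - a) ^ n / n !) (Set.Icc 0 c) :=
      (by fun_prop : Continuous fun a : ℝ => (c - a) ^ n / n !).integrableOn_Icc
    rw [← (volume_preserving_piFinSuccAbove (fun _ : Fin (n + 1) => ℝ) 0).symm
      |>.measure_preimage_equiv, Measure.volume_eq_prod,
      Measure.prod_apply ((isClosed_cornerSimplex _ _).measurableSet.preimage e.symm.measurable)]
    simp only [hslice]
    rw [lintegral_indicator measurableSet_Icc, ← ofReal_integral_eq_lintegral_ofReal hint,
      integral_Icc_eq_integral_Ioc, ← intervalIntegral.integral_of_le hc,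
      integral_sub_pow_div_factorial]
    filter_upwards [ae_restrict_mem measurableSet_Icc] with a ha
    have := sub_nonneg.2 ha.2
    positivity

/-- `gap r b i = b i - b (i + 1)`, with the convention `b r = 0`. -/
def gap (r : ℕ) : (Fin r → ℝ) →ₗ[ℝ] Fin r → ℝ where
  toFun b i := Fin.snoc (α := fun _ => ℝ) b 0 i.castSucc - Fin.snoc (α := fun _ => ℝ) b 0 i.succ
  map_add' b c := by ext i; simp only [Fin.snoc, cast_eq, Pi.add_apply]; split_ifs <;> ring
  map_smul' a b := by
    ext i; simp only [Fin.snoc, cast_eq, Pi.smul_apply, smul_eq_mul, RingHom.id_apply]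
    split_ifs <;> ring

lemma gap_apply {r : ℕ} (b : Fin r → ℝ) (i : Fin r) :
    gap r b i = Fin.snoc (α := fun _ => ℝ) b 0 i.castSucc - Fin.snoc (α := fun _ => ℝ) b 0 i.succ :=
  rfl

lemma gap_nonneg_iff {r : ℕ} {b : Fin r → ℝ} : (∀ i, 0 ≤ gap r b i) ↔ Antitone b ∧ 0 ≤ b := by
  simp only [gap_apply, sub_nonneg, ← Fin.antitone_iff_succ_le, Fin.antitone_snoc_iff, Pi.le_def,
    Pi.zero_apply]

lemma sum_succ_mul_gap {r : ℕ} (b : Fin r → ℝ) :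
    ∑ i : Fin r, ((i : ℝ) + 1) * gap r b i = ∑ i, b i := by
  simp only [gap_apply]
  rw [Fin.sum_succ_mul_sub_succ]
  simp

lemma gap_single_of_le {r : ℕ} {m k : Fin r} (h : m ≤ k) :
    gap r (Pi.single m 1) k = if k = m then 1 else 0 := by
  simp only [gap_apply, Fin.snoc_single_zero, Pi.single_apply, Fin.castSucc_inj,
    if_neg (ne_of_gt (Fin.castSucc_lt_succ_iff.2 h)), sub_zero]

def nefToSimplex (r : ℕ) : (Fin (r + 1) → ℝ) →ₗ[ℝ] (Fin (r + 1) → ℝ) where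
  toFun x := Fin.cons (3 * (x 0 - ∑ i, Fin.tail x i)) fun i => 2 * ((i : ℝ) + 1) * gap r (Fin.tail x) i
  map_add' x y := by
    have : Fin.tail (x + y) = Fin.tail x + Fin.tail y := rfl
    ext k
    cases k using Fin.cases <;>
      simp only [Fin.cons_zero, Fin.cons_succ, Pi.add_apply, this, map_add, sum_add_distrib] <;>
      ring
  map_smul' c x := by
    have : Fin.tail (c • x) = c • Fin.tail x := rfl
    ext k
    cases k using Fin.cases <;>
      simp only [Fin.cons_zero, Fin.cons_succ, Pi.smul_apply, this, map_smul, smul_eq_mul,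
        RingHom.id_apply, ← mul_sum] <;>
      ring

lemma nefToSimplex_apply_zero {r : ℕ} (x : Fin (r + 1) → ℝ) :
    nefToSimplex r x 0 = 3 * (x 0 - ∑ i, Fin.tail x i) := rfl

lemma nefToSimplex_apply_succ {r : ℕ} (x : Fin (r + 1) → ℝ) (i : Fin r) :
    nefToSimplex r x i.succ = 2 * ((i : ℝ) + 1) * gap r (Fin.tail x) i := rfl

lemma det_nefToSimplex (r : ℕ) : LinearMap.det (nefToSimplex r) = 3 * 2 ^ r * r ! := by
  rw [← LinearMap.det_toMatrix', Matrix.det_of_isUpperTriangular]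
  · have hfact : ∏ i : Fin r, ((i : ℝ) + 1) = r ! := by
      rw [Fin.prod_univ_eq_prod_range (fun i => (i : ℝ) + 1)]
      exact_mod_cast prod_range_add_one_eq_factorial r
    simp [LinearMap.toMatrix'_apply, Fin.prod_univ_succ, nefToSimplex_apply_zero,
      nefToSimplex_apply_succ, Fin.tail_single_zero, Fin.tail_single_succ, gap_single_of_le,
      prod_mul_distrib, hfact]
    ring
  · intro k j (h : j < k)
    rw [LinearMap.toMatrix'_apply]
    cases k using Fin.cases with
    | zero => exact absurd h (Fin.not_lt_zero j)
    | succ k =>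
      rw [nefToSimplex_apply_succ]
      cases j using Fin.cases with
      | zero => simp [Fin.tail_single_zero]
      | succ j =>
        simp [Fin.tail_single_succ, gap_single_of_le (Fin.succ_lt_succ_iff.1 h).le,
          (Fin.succ_lt_succ_iff.1 h).ne']

def nefSlice (r : ℕ) : Set (ℝ × (Fin r → ℝ)) :=
  {p | Antitone p.2 ∧ 0 ≤ p.2 ∧ ∑ i, p.2 i ≤ p.1 ∧ 3 * p.1 - ∑ i, p.2 i ≤ 1}

lemma piFinSuccAbove_preimage_nefSlice (r : ℕ) :
    MeasurableEquiv.piFinSuccAbove (fun _ : Fin (r + 1) => ℝ) 0 ⁻¹' nefSlice r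
      = nefToSimplex r ⁻¹' cornerSimplex (r + 1) 1 := by
  ext x
  have hsum : ∑ i : Fin r, 2 * ((i : ℝ) + 1) * gap r (Fin.tail x) i = 2 * ∑ i, Fin.tail x i := by
    simp only [mul_assoc, ← mul_sum, sum_succ_mul_gap]
  have hpos (i : Fin r) : (0 : ℝ) < 2 * ((i : ℝ) + 1) := by positivity
  simp only [nefSlice, cornerSimplex, Set.mem_preimage, Set.mem_ofPred_eq,
    MeasurableEquiv.piFinSuccAbove_apply, Fin.insertNthEquiv_symm_apply, Fin.removeNth_zero,
    Fin.forall_fin_succ, Fin.sum_univ_succ, nefToSimplex_apply_zero, nefToSimplex_apply_succ, hsum,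
    fun i => mul_nonneg_iff_of_pos_left (hpos i), gap_nonneg_iff]
  constructor
  · rintro ⟨hb, hb0, h0, h1⟩
    exact ⟨⟨by linarith, hb, hb0⟩, by linarith⟩
  · rintro ⟨⟨h0, hb, hb0⟩, h1⟩
    exact ⟨hb, hb0, by linarith, by linarith⟩

theorem nef_volume_infinitely_near_general (r : ℕ) :
    volume {p : ℝ × (Fin r → ℝ) |
        (∀ i j : Fin r, i ≤ j → p.2 j ≤ p.2 i) ∧
        (∀ i, 0 ≤ p.2 i) ∧
        (∑ i, p.2 i) ≤ p.1 ∧ 3 * p.1 - (∑ i, p.2 i) ≤ 1} =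
      ENNReal.ofReal (1 / (3 * 2 ^ r * Nat.factorial r * Nat.factorial (r + 1))) := by
  change volume (nefSlice r) = _
  have hdet : LinearMap.det (nefToSimplex r) ≠ 0 := by rw [det_nefToSimplex]; positivity
  rw [← (volume_preserving_piFinSuccAbove (fun _ : Fin (r + 1) => ℝ) 0).measure_preimage_equiv,
    piFinSuccAbove_preimage_nefSlice, Measure.addHaar_preimage_linearMap _ hdet,
    volume_cornerSimplex _ zero_le_one, det_nefToSimplex, ← ENNReal.ofReal_mul (by positivity),
    abs_of_pos (by positivity), one_pow]
  congr 1
  field_simp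

/-- The nef cone volume of the blow-up of `ℙ²` in `r` infinitely near points along a
line: the Lebesgue measure in `ℝ^{1+r}` of
`{(a, b) : b₁ ≥ … ≥ b_r ≥ 0, Σbᵢ ≤ a, 3a − Σbᵢ ≤ 1}` equals
`1/(3 · 2^r · r! · (r+1)!)`. -/
theorem nef_volume_infinitely_near (r : ℕ) (hr : 1 ≤ r) :
    volume {p : ℝ × (Fin r → ℝ) |
        (∀ i j : Fin r, i ≤ j → p.2 j ≤ p.2 i) ∧
        (∀ i, 0 ≤ p.2 i) ∧
        (∑ i, p.2 i) ≤ p.1 ∧ 3 * p.1 - (∑ i, p.2 i) ≤ 1} =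
      ENNReal.ofReal (1 / (3 * 2 ^ r * Nat.factorial r * Nat.factorial (r + 1))) :=
  nef_volume_infinitely_near_general r
end

section
/- For every integer r ≥ 2, the Lebesgue measure in ℝ^{1+r} of the set { (a, b₁, …, b_r) : b₁ ≥ b₂ ≥ ⋯ ≥ b_{r−1} ≥ 0, b_r ≤ 0, b₁ + ⋯ + b_{r−1} ≤ a, and 3a − (b₁ + ⋯ + b_r) ≤ 1 } equals 1/(3 · 2^{r−1} · (r−1)! · r! · (r+1)). -/
/-!
Put `d_i = b_i - b_{i+1}` for `i < r - 1` and `d_{r-1} = b_{r-1}`, so that `(b_1, …, b_{r-1})` is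
the vector of tail sums of `d`, a unimodular substitution. The monotonicity and sign conditions
on `b` become `d ≥ 0`, and `b_1 + ⋯ + b_{r-1} = ∑ i d_i`. After the volume-preserving shear
`a' = a - ∑ i d_i` the region is `{a' ≥ 0, d ≥ 0, b_r ≤ 0, 3a' + 2 ∑ i d_i - b_r ≤ 1}`, the image of
the standard simplex of dimension `r + 1` (volume `1/(r+1)!`) under the diagonal map with entries
`1/3, 1/2, 1/4, …, 1/(2(r-1)), -1`, whose determinant has absolute value `1/(3 · 2^{r-1} (r-1)!)`.
-/

open MeasureTheory Finset
open scoped Nat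

lemma lintegral_Icc_sub_pow_div_factorial (m : ℕ) {t : ℝ} (ht : 0 ≤ t) :
    ∫⁻ u in Set.Icc 0 t, ENNReal.ofReal ((t - u) ^ m / m !) =
      ENNReal.ofReal (t ^ (m + 1) / (m + 1)!) := by
  rw [← ofReal_integral_eq_lintegral_ofReal]
  · rw [integral_Icc_eq_integral_Ioc, ← intervalIntegral.integral_of_le ht,
      intervalIntegral.integral_div, intervalIntegral.integral_comp_sub_left (fun x => x ^ m),
      sub_self, sub_zero, integral_pow, zero_pow m.succ_ne_zero, sub_zero, div_div,
      Nat.factorial_succ]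
    push_cast
    ring
  · exact (by fun_prop : Continuous fun u : ℝ => (t - u) ^ m / m !).integrableOn_Icc
  · filter_upwards [self_mem_ae_restrict measurableSet_Icc] with u hu
    exact div_nonneg (pow_nonneg (sub_nonneg.2 hu.2) m) (by positivity)

lemma prod_volume_cone {β : Type*} [MeasurableSpace β] (ν : Measure β) [SFinite ν]
    {K : Set β} {f : β → ℝ} (hK : MeasurableSet K) (hf : Measurable f)
    (hf_nonneg : ∀ y ∈ K, 0 ≤ f y) (m : ℕ)
    (hν : ∀ s, 0 ≤ s → ν {y | y ∈ K ∧ f y ≤ s} = ENNReal.ofReal (s ^ m / m !))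
    {t : ℝ} (ht : 0 ≤ t) :
    (volume.prod ν) {p : ℝ × β | 0 ≤ p.1 ∧ p.2 ∈ K ∧ p.1 + f p.2 ≤ t} =
      ENNReal.ofReal (t ^ (m + 1) / (m + 1)!) := by
  set C := {p : ℝ × β | 0 ≤ p.1 ∧ p.2 ∈ K ∧ p.1 + f p.2 ≤ t}
  have hC : MeasurableSet C :=
    (measurableSet_le measurable_const measurable_fst).inter ((measurable_snd hK).inter
      (measurableSet_le (measurable_fst.add (hf.comp measurable_snd)) measurable_const))
  have hslice : ∀ x, ν (Prod.mk x ⁻¹' C) =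
      (Set.Icc 0 t).indicator (fun x => ENNReal.ofReal ((t - x) ^ m / m !)) x := by
    intro x
    by_cases hx : x ∈ Set.Icc 0 t
    · rw [Set.indicator_of_mem hx, ← hν (t - x) (sub_nonneg.2 hx.2)]
      congr 1
      ext y
      simp only [C, Set.mem_preimage, Set.mem_ofPred_eq, hx.1, true_and, le_sub_iff_add_le']
    · have hempty : Prod.mk x ⁻¹' C = ∅ := Set.eq_empty_of_forall_notMem
        fun y ⟨h0, hy, hle⟩ => hx ⟨h0, by linarith [hf_nonneg y hy]⟩
      rw [Set.indicator_of_notMem hx, hempty, measure_empty]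
  rw [Measure.prod_apply hC, lintegral_congr hslice, lintegral_indicator measurableSet_Icc,
    lintegral_Icc_sub_pow_div_factorial m ht]

lemma volume_pi_simplex (n : ℕ) {t : ℝ} (ht : 0 ≤ t) :
    volume {y : Fin n → ℝ | 0 ≤ y ∧ ∑ i, y i ≤ t} = ENNReal.ofReal (t ^ n / n !) := by
  induction n generalizing t with
  | zero => simp [ht, volume_pi]
  | succ n ih =>
    have hpre : {y : Fin (n + 1) → ℝ | 0 ≤ y ∧ ∑ i, y i ≤ t} =
        MeasurableEquiv.piFinSuccAbove (fun _ => ℝ) 0 ⁻¹'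
          {p | 0 ≤ p.1 ∧ p.2 ∈ Set.Ici 0 ∧ p.1 + ∑ i, p.2 i ≤ t} := by
      ext y
      simp [Fin.sum_univ_succ, Pi.le_def, Fin.forall_fin_succ, MeasurableEquiv.piFinSuccAbove,
        Fin.tail, and_assoc]
    rw [hpre, (volume_preserving_piFinSuccAbove (fun _ => ℝ) 0).measure_preimage_equiv]
    exact prod_volume_cone volume measurableSet_Ici (by fun_prop)
      (fun (y : Fin n → ℝ) hy => sum_nonneg fun i _ => hy i) n (fun s hs => ih hs) ht

def unitSimplex (n : ℕ) : Set (ℝ × (Fin n → ℝ) × ℝ) :=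
  {p | 0 ≤ p ∧ p.1 + (∑ i, p.2.1 i + p.2.2) ≤ 1}

lemma volume_unitSimplex (n : ℕ) : volume (unitSimplex n) = ENNReal.ofReal (1 / (n + 2)!) := by
  have hbase : ∀ s, 0 ≤ s →
      volume {q : (Fin n → ℝ) × ℝ | q ∈ Set.Ici 0 ∧ ∑ i, q.1 i + q.2 ≤ s} =
        ENNReal.ofReal (s ^ (n + 1) / (n + 1)!) := by
    intro s hs
    have hswap : {q : (Fin n → ℝ) × ℝ | q ∈ Set.Ici 0 ∧ ∑ i, q.1 i + q.2 ≤ s} =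
        Prod.swap ⁻¹' {p : ℝ × (Fin n → ℝ) | 0 ≤ p.1 ∧ p.2 ∈ Set.Ici 0 ∧ p.1 + ∑ i, p.2 i ≤ s} := by
      ext q
      simp only [Set.mem_Ici, Prod.le_def, Set.mem_preimage, Set.mem_ofPred_eq, Prod.fst_swap,
        Prod.snd_swap, Prod.fst_zero, Prod.snd_zero, add_comm q.2]
      tauto
    rw [hswap, Measure.volume_eq_prod, Measure.measurePreserving_swap.measure_preimage
      (by measurability)]
    exact prod_volume_cone volume measurableSet_Ici (by fun_prop)
      (fun (y : Fin n → ℝ) hy => sum_nonneg fun i _ => hy i) n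
      (fun s hs => volume_pi_simplex n hs) hs
  have hcone := prod_volume_cone (volume : Measure ((Fin n → ℝ) × ℝ)) measurableSet_Ici
    (by fun_prop) (fun (q : (Fin n → ℝ) × ℝ) hq => add_nonneg (sum_nonneg fun i _ => hq.1 i) hq.2)
    (n + 1) hbase zero_le_one
  rw [unitSimplex, Measure.volume_eq_prod]
  simpa [Prod.le_def, and_assoc] using hcone

lemma measurePreserving_sub_comp_snd {G β : Type*} [MeasurableSpace G] [AddGroup G]
    [MeasurableSub₂ G] [MeasurableSpace β] (μ : Measure G) [SFinite μ] [μ.IsAddRightInvariant]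
    (ν : Measure β) [SFinite ν] {h : β → G} (hh : Measurable h) :
    MeasurePreserving (fun p : G × β => (p.1 - h p.2, p.2)) (μ.prod ν) (μ.prod ν) := by
  have skew : MeasurePreserving (fun q : β × G => (q.1, q.2 - h q.1)) (ν.prod μ) (ν.prod μ) :=
    (MeasurePreserving.id ν).skew_product (g := fun y x => x - h y)
      (measurable_snd.sub (hh.comp measurable_fst))
      (ae_of_all _ fun y => map_sub_right_eq_self μ (h y))
  exact (Measure.measurePreserving_swap.comp skew).comp Measure.measurePreserving_swap

section TailSum

variable {R ι : Type*} [CommRing R] [LinearOrder ι] [LocallyFiniteOrderTop ι]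

variable (R ι) in
def tailSum : (ι → R) →ₗ[R] ι → R := LinearMap.pi fun i => ∑ j ∈ Ici i, LinearMap.proj j

lemma tailSum_apply (d : ι → R) (i : ι) : tailSum R ι d i = ∑ j ∈ Ici i, d j := by
  simp [tailSum]

lemma det_tailSum [Fintype ι] : LinearMap.det (tailSum R ι) = 1 := by
  rw [← LinearMap.det_toMatrix', Matrix.det_of_isUpperTriangular]
  · simp [LinearMap.toMatrix'_apply, tailSum_apply]
  · intro i j (hji : j < i)
    simp [LinearMap.toMatrix'_apply, tailSum_apply, hji.not_ge]

lemma sum_tailSum [Fintype ι] [LocallyFiniteOrderBot ι] (d : ι → R) :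
    ∑ i, tailSum R ι d i = ∑ j, #(Iic j) • d j := by
  simp_rw [tailSum_apply]
  rw [sum_comm' (t' := univ) (s' := Iic) (by simp)]
  simp

lemma antitone_tailSum_and_nonneg_iff [PartialOrder R] [IsOrderedAddMonoid R] [SuccOrder ι]
    {d : ι → R} : Antitone (tailSum R ι d) ∧ 0 ≤ tailSum R ι d ↔ 0 ≤ d := by
  constructor
  · rintro ⟨hanti, hnonneg⟩ i
    by_cases hi : IsMax i
    · have hlast : tailSum R ι d i = d i := by
        rw [tailSum_apply, ← sum_Ioi_add_eq_sum_Ici, Ioi_eq_empty.2 hi, sum_empty, zero_add]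
      exact hlast ▸ hnonneg i
    · have hstep : tailSum R ι d i = tailSum R ι d (Order.succ i) + d i := by
        rw [tailSum_apply, tailSum_apply, ← sum_Ioi_add_eq_sum_Ici]
        congr 2
        ext k
        simp [Order.succ_le_iff_of_not_isMax hi]
      have hsucc := hanti (Order.le_succ i)
      rw [hstep] at hsucc
      exact (le_add_iff_nonneg_right _).1 hsucc
  · intro hd
    refine ⟨fun i j hij => ?_, fun i => ?_⟩
    · simp only [tailSum_apply]
      exact sum_le_sum_of_subset_of_nonneg (Ici_subset_Ici.2 hij) fun k _ _ => hd k
    · exact tailSum_apply d i ▸ sum_nonneg fun k _ => hd k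

end TailSum

section Chamber

variable (n : ℕ)

-- A point is `(a, (b_1, …, b_{r-1}), b_r)` with `n = r - 1`.
def chamber : Set (ℝ × (Fin n → ℝ) × ℝ) :=
  {p | (∀ i j : Fin n, i ≤ j → p.2.1 j ≤ p.2.1 i) ∧ (∀ i, 0 ≤ p.2.1 i) ∧ p.2.2 ≤ 0 ∧
    (∑ i, p.2.1 i) ≤ p.1 ∧ 3 * p.1 - ((∑ i, p.2.1 i) + p.2.2) ≤ 1}

def weightedSum (d : Fin n → ℝ) : ℝ := ∑ j : Fin n, ((j : ℕ) + 1 : ℝ) * d j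

def chamberTailSum : (ℝ × (Fin n → ℝ) × ℝ) →ₗ[ℝ] ℝ × (Fin n → ℝ) × ℝ :=
  LinearMap.id.prodMap ((tailSum ℝ (Fin n)).prodMap LinearMap.id)

def chamberScaling : (ℝ × (Fin n → ℝ) × ℝ) →ₗ[ℝ] ℝ × (Fin n → ℝ) × ℝ :=
  ((3 : ℝ) • LinearMap.id).prodMap
    ((Matrix.toLin' (Matrix.diagonal fun i : Fin n => 2 * ((i : ℕ) + 1 : ℝ))).prodMap
      (-LinearMap.id))

lemma sum_tailSum_eq_weightedSum (d : Fin n → ℝ) :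
    ∑ i, tailSum ℝ (Fin n) d i = weightedSum n d := by
  simp [sum_tailSum, weightedSum]

lemma preimage_chamberTailSum_chamber :
    chamberTailSum n ⁻¹' chamber n =
      (fun p => (p.1 - weightedSum n p.2.1, p.2)) ⁻¹' (chamberScaling n ⁻¹' unitSimplex n) := by
  ext ⟨a, d, c⟩
  have horder := antitone_tailSum_and_nonneg_iff (d := d)
  have hdiag : ∀ i : Fin n, 0 ≤ 2 * ((i : ℕ) + 1 : ℝ) * d i ↔ 0 ≤ d i :=
    fun i => mul_nonneg_iff_of_pos_left (by positivity)
  have hsum : ∑ i : Fin n, 2 * ((i : ℕ) + 1 : ℝ) * d i = 2 * weightedSum n d := by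
    simp only [weightedSum, mul_sum, mul_assoc]
  simp only [chamber, unitSimplex, chamberTailSum, chamberScaling, Set.mem_preimage,
    Set.mem_ofPred_eq, LinearMap.prodMap_apply, LinearMap.id_apply, LinearMap.smul_apply,
    LinearMap.neg_apply, Matrix.toLin'_apply, Matrix.mulVec_diagonal, Prod.le_def, Pi.le_def,
    Prod.fst_zero, Prod.snd_zero, Pi.zero_apply, sum_tailSum_eq_weightedSum, hdiag, hsum,
    smul_eq_mul]
  constructor
  · rintro ⟨hanti, hnonneg, hc, ha, h⟩
    have hd : ∀ i, 0 ≤ d i := horder.1 ⟨hanti, hnonneg⟩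
    exact ⟨⟨by linarith, hd, by linarith⟩, by linarith⟩
  · rintro ⟨⟨ha, hd, hc⟩, h⟩
    obtain ⟨hanti, hnonneg⟩ := horder.2 hd
    exact ⟨hanti, hnonneg, by linarith, by linarith, by linarith⟩

lemma det_chamberTailSum : LinearMap.det (chamberTailSum n) = 1 := by
  simp [chamberTailSum, LinearMap.det_prodMap, det_tailSum]

lemma prod_two_mul_add_one : ∏ i : Fin n, 2 * ((i : ℕ) + 1 : ℝ) = 2 ^ n * n ! := by
  rw [prod_mul_distrib, prod_const, card_univ, Fintype.card_fin,
    Fin.prod_univ_eq_prod_range (fun i => (i : ℝ) + 1), ← prod_range_add_one_eq_factorial]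
  push_cast
  rfl

lemma det_chamberScaling : LinearMap.det (chamberScaling n) = -(3 * (2 ^ n * n !)) := by
  simp [chamberScaling, LinearMap.det_prodMap, prod_two_mul_add_one]

lemma volume_chamber :
    volume (chamber n) = ENNReal.ofReal (1 / (3 * 2 ^ n * n ! * (n + 2)!)) := by
  have : (volume : Measure ((Fin n → ℝ) × ℝ)).IsAddHaarMeasure :=
    Measure.prod.instIsAddHaarMeasure _ _
  have : (volume : Measure (ℝ × (Fin n → ℝ) × ℝ)).IsAddHaarMeasure :=
    Measure.prod.instIsAddHaarMeasure _ _
  have hsimplex : MeasurableSet (unitSimplex n) :=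
    measurableSet_Ici.inter (measurableSet_le
      (by fun_prop : Measurable fun p : ℝ × (Fin n → ℝ) × ℝ => p.1 + (∑ i, p.2.1 i + p.2.2))
      measurable_const)
  have hshift : Measurable fun q : (Fin n → ℝ) × ℝ => weightedSum n q.1 := by
    unfold weightedSum
    fun_prop
  calc volume (chamber n) = volume (chamberTailSum n ⁻¹' chamber n) := by
        rw [Measure.addHaar_preimage_linearMap _ (by simp [det_chamberTailSum]),
          det_chamberTailSum, inv_one, abs_one, ENNReal.ofReal_one, one_mul]
    _ = volume (chamberScaling n ⁻¹' unitSimplex n) := by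
        rw [preimage_chamberTailSum_chamber, Measure.volume_eq_prod]
        exact (measurePreserving_sub_comp_snd _ _ hshift).measure_preimage
          (hsimplex.preimage (chamberScaling n).continuous_of_finiteDimensional.measurable
            ).nullMeasurableSet
    _ = ENNReal.ofReal |(LinearMap.det (chamberScaling n))⁻¹| * volume (unitSimplex n) :=
        Measure.addHaar_preimage_linearMap _ (by simp [det_chamberScaling]; positivity) _
    _ = ENNReal.ofReal (1 / (3 * 2 ^ n * n ! * (n + 2)!)) := by
        rw [det_chamberScaling, volume_unitSimplex, ← ENNReal.ofReal_mul (abs_nonneg _),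
          abs_inv, abs_neg, abs_of_pos (by positivity)]
        field_simp

end Chamber

/-- The unique non-nef Zariski chamber of finite volume on the blow-up `X_r^∞` of `ℙ²`
in `r` infinitely near points along a line, namely the chamber supported on `E_r`:
the Lebesgue measure in `ℝ^{1+r} = ℝ × ℝ^{r−1} × ℝ` of
`{(a, b₁, …, b_{r−1}, b_r) : b₁ ≥ … ≥ b_{r−1} ≥ 0, b_r ≤ 0, b₁ + ⋯ + b_{r−1} ≤ a,
3a − Σbᵢ ≤ 1}` equals `1/(3 · 2^{r−1} · (r−1)! · r! · (r+1))`. -/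
theorem chamber_volume_infinitely_near (r : ℕ) (hr : 2 ≤ r) :
    volume {p : ℝ × (Fin (r - 1) → ℝ) × ℝ |
        (∀ i j : Fin (r - 1), i ≤ j → p.2.1 j ≤ p.2.1 i) ∧
        (∀ i, 0 ≤ p.2.1 i) ∧
        p.2.2 ≤ 0 ∧
        (∑ i, p.2.1 i) ≤ p.1 ∧
        3 * p.1 - ((∑ i, p.2.1 i) + p.2.2) ≤ 1} =
      ENNReal.ofReal
        (1 / (3 * 2 ^ (r - 1) * Nat.factorial (r - 1) * Nat.factorial r * (r + 1))) := by
  obtain ⟨n, rfl⟩ : ∃ n, r = n + 1 := ⟨r - 1, by omega⟩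
  refine (volume_chamber n).trans (congrArg ENNReal.ofReal ?_)
  rw [Nat.add_sub_cancel, Nat.factorial_succ (n + 1)]
  push_cast
  ring
end
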